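/- Fix real z, z' with z ≠ 0 ≠ z' and a half-integer j. On the (2j+1)-dimensional space, define J_± as in the analytical basis with parameter z and define K₃ := J₃, K_± := √([1]_q/[1]_{q'}) · √(([j+1/2]_{q'}² − [J₃∓1/2]_{q'}²)/([j+1/2]_q² − [J₃∓1/2]_q²)) · J_± (a diagonal-operator factor times J_±, interpreted on basis vectors). Then K₃, K_± satisfy [K₃, K_±] = ±K_± and [K_+, K_-] = [2K₃]_{q'}, i.e. they realize the z'-deformed commutation relations on the same space. -/

import Mathlib

/-!
The diagonal factor in `K_±` is exactly the ratio of the `z'`- and `z`-ladder coefficients,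
so `K_± = J_±(z')`: the "change of basis" produces the analytical-basis ladder operators
for the parameter `z'`. The relations then follow for any nonzero parameter `w` from two facts:
`J₃` shifts the weight by one along a ladder operator, and the difference of the Casimir gaps
`[j+1/2]² - [m∓1/2]²` is `[2m][1]` by `sinh² a - sinh² b = sinh (a+b) sinh (a-b)`.
-/

open Matrix

/-- Symmetric q-number `[x]_q := sinh(z x)/z`. -/
noncomputable def qnum (z x : ℝ) : ℝ := Real.sinh (z * x) / z

/-- Weight `m = k - j` of the `k`-th basis vector, `j = N/2`. -/
noncomputable def wt (N : ℕ) (k : Fin (N + 1)) : ℝ := ((k : ℕ) : ℝ) - (N : ℝ) / 2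

/-- `J₃ |j,m⟩ = m |j,m⟩`. -/
noncomputable def J3 (N : ℕ) : Matrix (Fin (N + 1)) (Fin (N + 1)) ℂ :=
  Matrix.diagonal fun k => (wt N k : ℂ)

/-- `J₊ |j,m⟩ = √([j+1/2]_q² − [m+1/2]_q²)/√([1]_q) |j,m+1⟩`. -/
noncomputable def Jp (z : ℝ) (N : ℕ) : Matrix (Fin (N + 1)) (Fin (N + 1)) ℂ :=
  Matrix.of fun a b => if (a : ℕ) = (b : ℕ) + 1 then
    ((Real.sqrt (qnum z ((N : ℝ) / 2 + 1 / 2) ^ 2 - qnum z (wt N b + 1 / 2) ^ 2)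
        / Real.sqrt (qnum z 1)) : ℂ) else 0

/-- `J₋ |j,m⟩ = √([j+1/2]_q² − [m−1/2]_q²)/√([1]_q) |j,m−1⟩`. -/
noncomputable def Jm (z : ℝ) (N : ℕ) : Matrix (Fin (N + 1)) (Fin (N + 1)) ℂ :=
  Matrix.of fun a b => if (a : ℕ) + 1 = (b : ℕ) then
    ((Real.sqrt (qnum z ((N : ℝ) / 2 + 1 / 2) ^ 2 - qnum z (wt N b - 1 / 2) ^ 2)
        / Real.sqrt (qnum z 1)) : ℂ) else 0

/-- `[2K₃]_{q'}` acts on `|j,m⟩` as multiplication by `sinh(2z'm)/z'`. -/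
noncomputable def twoK3q (z' : ℝ) (N : ℕ) : Matrix (Fin (N + 1)) (Fin (N + 1)) ℂ :=
  Matrix.diagonal fun k => (qnum z' (2 * wt N k) : ℂ)

/-- Diagonal change-of-basis factor
`√([1]_q/[1]_{q'}) √(([j+1/2]_{q'}² − [J₃∓1/2]_{q'}²)/([j+1/2]_q² − [J₃∓1/2]_q²))`,
evaluated on the weight `m` shifted by `s/2`. -/
noncomputable def Dfac (z z' : ℝ) (N : ℕ) (s : ℝ) :
    Matrix (Fin (N + 1)) (Fin (N + 1)) ℂ :=
  Matrix.diagonal fun k =>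
    ((Real.sqrt (qnum z 1 / qnum z' 1) *
      Real.sqrt ((qnum z' ((N : ℝ) / 2 + 1 / 2) ^ 2 - qnum z' (wt N k + s / 2) ^ 2)
        / (qnum z ((N : ℝ) / 2 + 1 / 2) ^ 2 - qnum z (wt N k + s / 2) ^ 2))) : ℂ)

lemma qnum_one_pos {w : ℝ} (hw : w ≠ 0) : 0 < qnum w 1 := by
  rw [qnum, mul_one]
  rcases hw.lt_or_gt with h | h
  · exact div_pos_of_neg_of_neg (Real.sinh_neg_iff.2 h) h
  · exact div_pos (Real.sinh_pos_iff.2 h) h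

lemma qnum_sq_lt_qnum_sq_iff {w : ℝ} (hw : w ≠ 0) {x y : ℝ} :
    qnum w x ^ 2 < qnum w y ^ 2 ↔ |x| < |y| := by
  have hw2 : 0 < w ^ 2 := by positivity
  simp only [qnum, div_pow, div_lt_div_iff_of_pos_right hw2, Real.sinh_sq, sub_lt_sub_iff_right]
  rw [pow_lt_pow_iff_left₀ (Real.cosh_pos _).le (Real.cosh_pos _).le two_ne_zero,
    Real.cosh_lt_cosh, abs_mul, abs_mul, mul_lt_mul_iff_right₀ (abs_pos.2 hw)]

lemma qnum_sq_sub_qnum_sq (w x y : ℝ) :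
    qnum w x ^ 2 - qnum w y ^ 2 = qnum w (x + y) * qnum w (x - y) := by
  simp only [qnum, mul_add, mul_sub, Real.sinh_add, Real.sinh_sub]
  linear_combination (Real.sinh (w * y) ^ 2 / w ^ 2) * Real.cosh_sq (w * x)
    - (Real.sinh (w * x) ^ 2 / w ^ 2) * Real.cosh_sq (w * y)

lemma qnum_sq_le_qnum_sq_iff {w : ℝ} (hw : w ≠ 0) {x y : ℝ} :
    qnum w x ^ 2 ≤ qnum w y ^ 2 ↔ |x| ≤ |y| := by
  simpa only [not_lt] using (qnum_sq_lt_qnum_sq_iff hw (x := y) (y := x)).not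

lemma qnum_neg (w x : ℝ) : qnum w (-x) = -qnum w x := by
  rw [qnum, qnum, mul_neg, Real.sinh_neg, neg_div]

/-- The analytical-basis ladder coefficient at the shifted weight `t = m ± 1/2`, `j = N/2`. -/
noncomputable def ladderCoeff (w : ℝ) (N : ℕ) (t : ℝ) : ℝ :=
  √(qnum w ((N : ℝ) / 2 + 1 / 2) ^ 2 - qnum w t ^ 2) / √(qnum w 1)

section LadderCoeff

variable {w : ℝ} {N : ℕ} {t : ℝ}

lemma ladderCoeff_of_abs_eq (ht : |t| = (N : ℝ) / 2 + 1 / 2) : ladderCoeff w N t = 0 := by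
  have hsq : qnum w t ^ 2 = qnum w ((N : ℝ) / 2 + 1 / 2) ^ 2 := by
    rcases (abs_eq (by positivity)).1 ht with h | h
    · rw [h]
    · rw [h, qnum_neg, neg_sq]
  rw [ladderCoeff, hsq, sub_self, Real.sqrt_zero, zero_div]

lemma ladderCoeff_mul_self (hw : w ≠ 0) (ht : |t| ≤ (N : ℝ) / 2 + 1 / 2) :
    ladderCoeff w N t * ladderCoeff w N t
      = (qnum w ((N : ℝ) / 2 + 1 / 2) ^ 2 - qnum w t ^ 2) / qnum w 1 := by
  have hgap : qnum w t ^ 2 ≤ qnum w ((N : ℝ) / 2 + 1 / 2) ^ 2 :=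
    (qnum_sq_le_qnum_sq_iff hw).2 <| by
      rwa [abs_of_pos (by positivity : (0 : ℝ) < (N : ℝ) / 2 + 1 / 2)]
  rw [ladderCoeff, div_mul_div_comm, Real.mul_self_sqrt (sub_nonneg.2 hgap),
    Real.mul_self_sqrt (qnum_one_pos hw).le]

lemma ladderCoeff_sub_half_sq_sub (hw : w ≠ 0) {m : ℝ}
    (hm : |m - 1 / 2| ≤ (N : ℝ) / 2 + 1 / 2) (hm' : |m + 1 / 2| ≤ (N : ℝ) / 2 + 1 / 2) :
    ladderCoeff w N (m - 1 / 2) * ladderCoeff w N (m - 1 / 2)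
      - ladderCoeff w N (m + 1 / 2) * ladderCoeff w N (m + 1 / 2) = qnum w (2 * m) := by
  rw [ladderCoeff_mul_self hw hm, ladderCoeff_mul_self hw hm', ← sub_div,
    sub_sub_sub_cancel_left, qnum_sq_sub_qnum_sq, show m + 1 / 2 + (m - 1 / 2) = 2 * m by ring,
    show m + 1 / 2 - (m - 1 / 2) = 1 by ring, mul_div_cancel_right₀ _ (qnum_one_pos hw).ne']

lemma sqrt_ratio_mul_ladderCoeff {z z' : ℝ} (hz : z ≠ 0) (hz' : z' ≠ 0)
    (ht : |t| < (N : ℝ) / 2 + 1 / 2) :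
    √(qnum z 1 / qnum z' 1) *
        √((qnum z' ((N : ℝ) / 2 + 1 / 2) ^ 2 - qnum z' t ^ 2)
          / (qnum z ((N : ℝ) / 2 + 1 / 2) ^ 2 - qnum z t ^ 2)) * ladderCoeff z N t
      = ladderCoeff z' N t := by
  have hJ : |t| < |(N : ℝ) / 2 + 1 / 2| := by
    rwa [abs_of_pos (by positivity : (0 : ℝ) < (N : ℝ) / 2 + 1 / 2)]
  have hgap : 0 < qnum z ((N : ℝ) / 2 + 1 / 2) ^ 2 - qnum z t ^ 2 :=
    sub_pos.2 ((qnum_sq_lt_qnum_sq_iff hz).2 hJ)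
  have hgap' : 0 < qnum z' ((N : ℝ) / 2 + 1 / 2) ^ 2 - qnum z' t ^ 2 :=
    sub_pos.2 ((qnum_sq_lt_qnum_sq_iff hz').2 hJ)
  have hu := qnum_one_pos hz
  have hu' := qnum_one_pos hz'
  rw [ladderCoeff, ladderCoeff, Real.sqrt_div hu.le, Real.sqrt_div hgap'.le]
  generalize qnum z ((N : ℝ) / 2 + 1 / 2) ^ 2 - qnum z t ^ 2 = X at hgap ⊢
  have hX := Real.sqrt_pos.2 hgap
  field_simp

end LadderCoeff

section LadderMatrix

variable {N : ℕ}

def raisingMatrix (f : Fin (N + 1) → ℂ) : Matrix (Fin (N + 1)) (Fin (N + 1)) ℂ :=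
  of fun a b => if (a : ℕ) = b + 1 then f b else 0

def loweringMatrix (f : Fin (N + 1) → ℂ) : Matrix (Fin (N + 1)) (Fin (N + 1)) ℂ :=
  of fun a b => if (a : ℕ) + 1 = b then f b else 0

lemma wt_of_val_eq_succ {a b : Fin (N + 1)} (h : (a : ℕ) = b + 1) : wt N a = wt N b + 1 := by
  simp only [wt, h]; push_cast; ring

lemma abs_wt_le (k : Fin (N + 1)) : |wt N k| ≤ (N : ℝ) / 2 := by
  have hk : ((k : ℕ) : ℝ) ≤ N := by exact_mod_cast Nat.lt_succ_iff.1 k.is_lt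
  rw [wt, abs_le]
  constructor <;> linarith [((k : ℕ).cast_nonneg : (0 : ℝ) ≤ (k : ℕ))]

lemma abs_wt_add_half_le (k : Fin (N + 1)) : |wt N k + 1 / 2| ≤ (N : ℝ) / 2 + 1 / 2 :=
  (abs_add_le _ _).trans (by linarith [abs_wt_le k, abs_of_pos (one_half_pos : (0 : ℝ) < 1 / 2)])

lemma abs_wt_sub_half_le (k : Fin (N + 1)) : |wt N k - 1 / 2| ≤ (N : ℝ) / 2 + 1 / 2 :=
  (abs_sub _ _).trans (by linarith [abs_wt_le k, abs_of_pos (one_half_pos : (0 : ℝ) < 1 / 2)])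

lemma abs_wt_add_half_lt {k : Fin (N + 1)} (hk : (k : ℕ) < N) :
    |wt N k + 1 / 2| < (N : ℝ) / 2 + 1 / 2 := by
  have hk' : ((k : ℕ) : ℝ) + 1 ≤ N := by exact_mod_cast hk
  rw [wt, abs_lt]
  constructor <;> linarith [((k : ℕ).cast_nonneg : (0 : ℝ) ≤ (k : ℕ))]

lemma J3_mul_raisingMatrix_sub (f : Fin (N + 1) → ℂ) :
    J3 N * raisingMatrix f - raisingMatrix f * J3 N = raisingMatrix f := by
  ext a b
  simp only [Matrix.sub_apply, J3, raisingMatrix, diagonal_mul, mul_diagonal, of_apply]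
  split_ifs with h
  · rw [wt_of_val_eq_succ h]; push_cast; ring
  · ring

lemma J3_mul_loweringMatrix_sub (f : Fin (N + 1) → ℂ) :
    J3 N * loweringMatrix f - loweringMatrix f * J3 N = -loweringMatrix f := by
  ext a b
  simp only [Matrix.sub_apply, Matrix.neg_apply, J3, loweringMatrix, diagonal_mul, mul_diagonal,
    of_apply]
  split_ifs with h
  · rw [wt_of_val_eq_succ h.symm]; push_cast; ring
  · ring

lemma sum_ite_val_eq_succ {M : Type*} [AddCommMonoid M] (a : Fin (N + 1)) (x : M) :
    ∑ b : Fin (N + 1), (if (a : ℕ) = b + 1 then x else 0) = if (a : ℕ) = 0 then 0 else x := by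
  split_ifs with ha
  · exact Finset.sum_eq_zero fun b _ => if_neg (by omega)
  · rw [Fintype.sum_eq_single ⟨a - 1, by omega⟩
      fun b hb => if_neg fun h => hb (Fin.ext (by simp only; omega))]
    exact if_pos (by simp only; omega)

lemma sum_ite_succ_eq_val {M : Type*} [AddCommMonoid M] (a : Fin (N + 1)) (x : M) :
    ∑ b : Fin (N + 1), (if (a : ℕ) + 1 = b then x else 0) = if (a : ℕ) = N then 0 else x := by
  split_ifs with ha
  · exact Finset.sum_eq_zero fun b _ => if_neg (by omega)
  · rw [Fintype.sum_eq_single ⟨a + 1, by omega⟩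
      fun b hb => if_neg fun h => hb (Fin.ext (by simp only; omega))]
    exact if_pos rfl

lemma raisingMatrix_mul_loweringMatrix (F G : ℝ → ℂ) (hF : F (-((N : ℝ) / 2 + 1 / 2)) = 0) :
    raisingMatrix (fun b => F (wt N b + 1 / 2)) * loweringMatrix (fun b => G (wt N b - 1 / 2))
      = diagonal fun a => F (wt N a - 1 / 2) * G (wt N a - 1 / 2) := by
  ext a c
  have hsummand : ∀ b : Fin (N + 1),
      raisingMatrix (fun b => F (wt N b + 1 / 2)) a b
          * loweringMatrix (fun b => G (wt N b - 1 / 2)) b c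
        = if (a : ℕ) = b + 1 then
            (if a = c then F (wt N a - 1 / 2) * G (wt N a - 1 / 2) else 0) else 0 := by
    intro b
    simp only [raisingMatrix, loweringMatrix, of_apply]
    by_cases hab : (a : ℕ) = b + 1
    · have hwt : wt N b + 1 / 2 = wt N a - 1 / 2 := by rw [wt_of_val_eq_succ hab]; ring
      by_cases hac : a = c
      · subst hac
        rw [if_pos hab, if_pos hab.symm, if_pos hab, if_pos rfl, hwt]
      · rw [if_pos hab, if_pos hab, if_neg hac, if_neg fun h => hac (Fin.ext (by omega)),
          mul_zero]
    · rw [if_neg hab, if_neg hab, zero_mul]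
  rw [mul_apply, Finset.sum_congr rfl fun b _ => hsummand b, sum_ite_val_eq_succ, diagonal_apply]
  split_ifs with ha hac
  · have hwt : wt N a - 1 / 2 = -((N : ℝ) / 2 + 1 / 2) := by simp only [wt, ha]; push_cast; ring
    rw [hwt, hF, zero_mul]
  all_goals rfl

lemma loweringMatrix_mul_raisingMatrix (F G : ℝ → ℂ) (hF : F ((N : ℝ) / 2 + 1 / 2) = 0) :
    loweringMatrix (fun b => G (wt N b - 1 / 2)) * raisingMatrix (fun b => F (wt N b + 1 / 2))
      = diagonal fun a => G (wt N a + 1 / 2) * F (wt N a + 1 / 2) := by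
  ext a c
  have hsummand : ∀ b : Fin (N + 1),
      loweringMatrix (fun b => G (wt N b - 1 / 2)) a b
          * raisingMatrix (fun b => F (wt N b + 1 / 2)) b c
        = if (a : ℕ) + 1 = b then
            (if a = c then G (wt N a + 1 / 2) * F (wt N a + 1 / 2) else 0) else 0 := by
    intro b
    simp only [raisingMatrix, loweringMatrix, of_apply]
    by_cases hab : (a : ℕ) + 1 = b
    · have hwt : wt N b - 1 / 2 = wt N a + 1 / 2 := by rw [wt_of_val_eq_succ hab.symm]; ring
      by_cases hac : a = c
      · subst hac
        rw [if_pos hab, if_pos hab.symm, if_pos hab, if_pos rfl, hwt]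
      · rw [if_pos hab, if_pos hab, if_neg hac, if_neg fun h => hac (Fin.ext (by omega)),
          mul_zero]
    · rw [if_neg hab, if_neg hab, zero_mul]
  rw [mul_apply, Finset.sum_congr rfl fun b _ => hsummand b, sum_ite_succ_eq_val, diagonal_apply]
  split_ifs with ha hac
  · have hwt : wt N a + 1 / 2 = (N : ℝ) / 2 + 1 / 2 := by simp only [wt, ha]; ring
    rw [hwt, hF, mul_zero]
  all_goals rfl

end LadderMatrix

section AnalyticalBasis

variable {w : ℝ} {N : ℕ}

lemma Jp_eq_raisingMatrix :
    Jp w N = raisingMatrix fun b => (ladderCoeff w N (wt N b + 1 / 2) : ℂ) := by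
  simp only [Jp, raisingMatrix, ladderCoeff, Complex.ofReal_div]

lemma Jm_eq_loweringMatrix :
    Jm w N = loweringMatrix fun b => (ladderCoeff w N (wt N b - 1 / 2) : ℂ) := by
  simp only [Jm, loweringMatrix, ladderCoeff, Complex.ofReal_div]

lemma Jp_mul_Jm_sub_Jm_mul_Jp (hw : w ≠ 0) : Jp w N * Jm w N - Jm w N * Jp w N = twoK3q w N := by
  set c : ℝ → ℂ := fun t => (ladderCoeff w N t : ℂ)
  have hvanish : ∀ t, |t| = (N : ℝ) / 2 + 1 / 2 → c t = 0 := fun t ht => by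
    simp only [c, ladderCoeff_of_abs_eq ht, Complex.ofReal_zero]
  rw [Jp_eq_raisingMatrix, Jm_eq_loweringMatrix,
    raisingMatrix_mul_loweringMatrix c c (hvanish _ (by rw [abs_neg, abs_of_pos (by positivity)])),
    loweringMatrix_mul_raisingMatrix c c (hvanish _ (abs_of_pos (by positivity))),
    twoK3q, diagonal_sub]
  congr 1
  funext k
  simp only [c]
  exact_mod_cast ladderCoeff_sub_half_sq_sub hw (abs_wt_sub_half_le k) (abs_wt_add_half_le k)

end AnalyticalBasis

section ChangeOfBasis

variable {z z' : ℝ} {N : ℕ}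

lemma Dfac_mul_Jp (hz : z ≠ 0) (hz' : z' ≠ 0) : Dfac z z' N (-1) * Jp z N = Jp z' N := by
  rw [Jp_eq_raisingMatrix, Jp_eq_raisingMatrix]
  ext a b
  simp only [Dfac, raisingMatrix, diagonal_mul, of_apply]
  split_ifs with h
  · have hwt : wt N a + -1 / 2 = wt N b + 1 / 2 := by rw [wt_of_val_eq_succ h]; ring
    rw [hwt]
    exact_mod_cast sqrt_ratio_mul_ladderCoeff hz hz' (abs_wt_add_half_lt (by omega))
  · rw [mul_zero]

lemma Dfac_mul_Jm (hz : z ≠ 0) (hz' : z' ≠ 0) : Dfac z z' N 1 * Jm z N = Jm z' N := by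
  rw [Jm_eq_loweringMatrix, Jm_eq_loweringMatrix]
  ext a b
  simp only [Dfac, loweringMatrix, diagonal_mul, of_apply]
  split_ifs with h
  · have hwt : wt N b - 1 / 2 = wt N a + 1 / 2 := by rw [wt_of_val_eq_succ h.symm]; ring
    rw [hwt]
    exact_mod_cast sqrt_ratio_mul_ladderCoeff hz hz' (abs_wt_add_half_lt (by omega))
  · rw [mul_zero]

end ChangeOfBasis

/-- With `K₃ := J₃`, `K₊ := f₊(J₃) J₊`, `K₋ := f₋(J₃) J₋` (the diagonal factors
of equation (mapKtoJ)), the operators `K₃, K_±` realize on the same space the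
`z'`-deformed relations `[K₃, K_±] = ±K_±`, `[K₊, K₋] = [2K₃]_{q'}`. -/
theorem quantum_basis_change_commutation (z z' : ℝ) (hz : z ≠ 0) (hz' : z' ≠ 0)
    (N : ℕ) :
    (J3 N * (Dfac z z' N (-1) * Jp z N) - (Dfac z z' N (-1) * Jp z N) * J3 N
        = Dfac z z' N (-1) * Jp z N) ∧
    (J3 N * (Dfac z z' N 1 * Jm z N) - (Dfac z z' N 1 * Jm z N) * J3 N
        = -(Dfac z z' N 1 * Jm z N)) ∧
    ((Dfac z z' N (-1) * Jp z N) * (Dfac z z' N 1 * Jm z N)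
        - (Dfac z z' N 1 * Jm z N) * (Dfac z z' N (-1) * Jp z N)
        = twoK3q z' N) := by
  rw [Dfac_mul_Jp hz hz', Dfac_mul_Jm hz hz']
  refine ⟨?_, ?_, Jp_mul_Jm_sub_Jm_mul_Jp hz'⟩
  · rw [Jp_eq_raisingMatrix]; exact J3_mul_raisingMatrix_sub _
  · rw [Jm_eq_loweringMatrix]; exact J3_mul_loweringMatrix_sub _
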